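/- Let σ > 0 and let Φ(z) = (1/√(2π))·∫_{−∞}^{z} e^{−u²/2} du denote the standard normal distribution function. The function Π₂(y,t) = y·(1 − 2Φ(−1/(σ y √t))), defined for y > 0 and t > 0, is a classical solution of the degenerate parabolic equation Π_t = (σ²/2)·y⁴·Π_yy at every point (y,t) with y > 0 and t > 0. -/

import Mathlib

open Real MeasureTheory

/-- The standard normal distribution (Laplace) function
`Φ(z) = (1/√(2π))·∫_{−∞}^{z} e^{−u²/2} du`. -/
noncomputable def stdNormalCDF (z : ℝ) : ℝ :=
  (1 / Real.sqrt (2 * Real.pi)) * ∫ u in Set.Iic z, Real.exp (-(u ^ 2) / 2)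

/-- The Cox–Hobson function `Π₂(y,t) = y·(1 − 2Φ(−1/(σ y √t)))`. -/
noncomputable def coxHobson (σ : ℝ) (y t : ℝ) : ℝ :=
  y * (1 - 2 * stdNormalCDF (-(1 / (σ * y * Real.sqrt t))))



lemma integrable_gauss : Integrable (fun u : ℝ => Real.exp (-(u ^ 2) / 2)) := by
  have h := integrable_exp_neg_mul_sq (by norm_num : (0:ℝ) < 1/2)
  have : (fun u : ℝ => Real.exp (-(u ^ 2) / 2)) = fun u : ℝ => Real.exp (-(1/2) * u ^ 2) := by
    funext u; ring_nf
  rw [this]; exact h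

lemma continuous_gauss : Continuous (fun u : ℝ => Real.exp (-(u ^ 2) / 2)) := by
  fun_prop

noncomputable def phi (z : ℝ) : ℝ := (1 / Real.sqrt (2 * Real.pi)) * Real.exp (-(z ^ 2) / 2)

lemma hasDerivAt_stdNormalCDF (z : ℝ) :
    HasDerivAt stdNormalCDF (phi z) z := by
  have key : stdNormalCDF = fun w =>
      (1 / Real.sqrt (2 * Real.pi)) *
        ((∫ u in Set.Iic (0:ℝ), Real.exp (-(u ^ 2) / 2)) +
          ∫ u in (0:ℝ)..w, Real.exp (-(u ^ 2) / 2)) := by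
    funext w
    unfold stdNormalCDF
    congr 1
    rw [← intervalIntegral.integral_Iic_sub_Iic (integrable_gauss.integrableOn)
      (integrable_gauss.integrableOn)]
    ring
  rw [key]
  have h1 : HasDerivAt (fun w => ∫ u in (0:ℝ)..w, Real.exp (-(u ^ 2) / 2))
      (Real.exp (-(z ^ 2) / 2)) z :=
    intervalIntegral.integral_hasDerivAt_right
      integrable_gauss.intervalIntegrable
      (continuous_gauss.stronglyMeasurableAtFilter _ _)
      continuous_gauss.continuousAt
  exact ((h1.const_add _).const_mul _)

lemma hasDerivAt_phi (w : ℝ) : HasDerivAt phi (phi w * (-w)) w := by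
  have h1 : HasDerivAt (fun w : ℝ => -(w ^ 2) / 2) (-w) w := by
    have := ((hasDerivAt_pow 2 w).neg.div_const 2)
    refine this.congr_deriv ?_; push_cast; ring
  have h2 := (h1.exp.const_mul (1 / Real.sqrt (2 * Real.pi)))
  unfold phi
  refine h2.congr_deriv ?_; ring

noncomputable def F (σ t y : ℝ) : ℝ :=
  (1 - 2 * stdNormalCDF (-(1 / (σ * y * Real.sqrt t))))
    - 2 * y * phi (-(1 / (σ * y * Real.sqrt t))) * (σ * Real.sqrt t / (σ * y * Real.sqrt t) ^ 2)

-- derivative of inner map y' ↦ -(1/(σ y' s))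
lemma hasDerivAt_inner (σ t : ℝ) (hσ : 0 < σ) (ht : 0 < t) {y : ℝ} (hy : 0 < y) :
    HasDerivAt (fun y' => -(1 / (σ * y' * Real.sqrt t)))
      (σ * Real.sqrt t / (σ * y * Real.sqrt t) ^ 2) y := by
  have hs : 0 < Real.sqrt t := Real.sqrt_pos.mpr ht
  have hne : σ * y * Real.sqrt t ≠ 0 := by positivity
  have h1 : HasDerivAt (fun y' => σ * y' * Real.sqrt t) (σ * Real.sqrt t) y := by
    have := ((hasDerivAt_id y).const_mul σ).mul_const (Real.sqrt t)
    refine this.congr_deriv ?_; ring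
  have h2 := (h1.inv hne).neg
  have heq : (fun y' => -(1 / (σ * y' * Real.sqrt t))) = fun x => -(σ * x * Real.sqrt t)⁻¹ := by
    funext x; rw [one_div]
  rw [heq]
  refine h2.congr_deriv ?_
  ring

lemma hasDerivAt_coxHobson_y (σ t : ℝ) (hσ : 0 < σ) (ht : 0 < t) {y : ℝ} (hy : 0 < y) :
    HasDerivAt (fun y' => coxHobson σ y' t) (F σ t y) y := by
  have h3 := hasDerivAt_inner σ t hσ ht hy
  have h4 := (hasDerivAt_stdNormalCDF _).comp y h3
  have h5 := ((h4.const_mul 2).const_sub 1)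
  have h6 := (hasDerivAt_id y).mul h5
  unfold coxHobson F
  refine h6.congr_deriv ?_
  simp only [id_eq, Function.comp_apply]
  ring

lemma sqrt2pi_pos : 0 < Real.sqrt (2 * Real.pi) :=
  Real.sqrt_pos.mpr (by positivity)

lemma hasDerivAt_F (σ t : ℝ) (hσ : 0 < σ) (ht : 0 < t) {y : ℝ} (hy : 0 < y) :
    HasDerivAt (fun y' => F σ t y')
      (-(2 * phi (-(1 / (σ * y * Real.sqrt t))) / (σ ^ 3 * Real.sqrt t ^ 3 * y ^ 4))) y := by
  have hs : 0 < Real.sqrt t := Real.sqrt_pos.mpr ht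
  have hne : σ * y * Real.sqrt t ≠ 0 := by positivity
  have hA := hasDerivAt_inner σ t hσ ht hy
  -- Φ part
  have hΦ := (((hasDerivAt_stdNormalCDF _).comp y hA).const_mul 2).const_sub 1
  -- phi ∘ z part
  have hphi := (hasDerivAt_phi (-(1 / (σ * y * Real.sqrt t)))).comp y hA
  -- q part
  have h1 : HasDerivAt (fun y' => σ * y' * Real.sqrt t) (σ * Real.sqrt t) y := by
    have := ((hasDerivAt_id y).const_mul σ).mul_const (Real.sqrt t)
    refine this.congr_deriv ?_; ring
  have hp := h1.pow 2
  have hq0 := (hp.inv (pow_ne_zero 2 hne)).const_mul (σ * Real.sqrt t)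
  have hq : HasDerivAt (fun y' => σ * Real.sqrt t / (σ * y' * Real.sqrt t) ^ 2)
      (σ * Real.sqrt t *
        (-(↑2 * (σ * y * Real.sqrt t) ^ (2 - 1) * (σ * Real.sqrt t)) /
          ((σ * y * Real.sqrt t) ^ 2) ^ 2)) y := by
    have heq : (fun y' => σ * Real.sqrt t / (σ * y' * Real.sqrt t) ^ 2)
        = fun y' => σ * Real.sqrt t * ((σ * y' * Real.sqrt t) ^ 2)⁻¹ := by
      funext x; rw [div_eq_mul_inv]
    rw [heq]; exact hq0
  -- product  2 * y' * phi(z y') * q y'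
  have hy2 : HasDerivAt (fun y' : ℝ => 2 * y') (2 : ℝ) y := by
    simpa using (hasDerivAt_id y).const_mul (2 : ℝ)
  have hprod := ((hy2.mul hphi).mul hq)
  have hF := hΦ.sub hprod
  have heqF : (fun y' => F σ t y') =
      fun y' => (1 - 2 * (stdNormalCDF ∘ fun y'' => -(1 / (σ * y'' * Real.sqrt t))) y')
        - (2 * y' * (phi ∘ fun y'' => -(1 / (σ * y'' * Real.sqrt t))) y')
            * (σ * Real.sqrt t / (σ * y' * Real.sqrt t) ^ 2) := by
    funext x; simp only [Function.comp_apply, F]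
  rw [heqF]
  refine hF.congr_deriv ?_
  simp only [Function.comp_apply, Pi.mul_apply]
  generalize phi (-(1 / (σ * y * Real.sqrt t))) = P
  have h2π := Real.sqrt_pos.mpr (by positivity : (0:ℝ) < 2 * Real.pi)
  field_simp
  ring

lemma hasDerivAt_coxHobson_t (σ : ℝ) (hσ : 0 < σ) (y : ℝ) (hy : 0 < y) {t : ℝ} (ht : 0 < t) :
    HasDerivAt (fun t' => coxHobson σ y t')
      (-(phi (-(1 / (σ * y * Real.sqrt t))) / (σ * Real.sqrt t ^ 3))) t := by
  have hs : 0 < Real.sqrt t := Real.sqrt_pos.mpr ht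
  have hne : σ * y * Real.sqrt t ≠ 0 := by positivity
  have hsq := Real.hasDerivAt_sqrt ht.ne'
  have h1 : HasDerivAt (fun t' => σ * y * Real.sqrt t') (σ * y * (1 / (2 * Real.sqrt t))) t :=
    hsq.const_mul (σ * y)
  have h2 := (h1.inv hne).neg
  have h3 := (hasDerivAt_stdNormalCDF _).comp t h2
  have h6 := (((h3.const_mul 2).const_sub 1).const_mul y)
  unfold coxHobson
  have heq : (fun t' => y * (1 - 2 * stdNormalCDF (-(1 / (σ * y * Real.sqrt t')))))
      = fun t' => y * (1 - 2 * (stdNormalCDF ∘ fun x => -(σ * y * Real.sqrt x)⁻¹) t') := by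
    funext x; simp [one_div]
  rw [heq]
  refine h6.congr_deriv ?_
  simp only [Function.comp_apply, one_div]
  generalize phi (-(σ * y * Real.sqrt t)⁻¹) = P
  field_simp

/-- `Π₂(y,t) = y·(1 − 2Φ(−1/(σ y √t)))` is a classical solution
of `Π_t = (σ²/2)·y⁴·Π_yy` at every point `(y,t)` with `y > 0`, `t > 0`. -/
theorem coxHobson_solves_degenerate_equation (σ : ℝ) (hσ : 0 < σ) (y t : ℝ)
    (hy : 0 < y) (ht : 0 < t) :
    ∃ py pyy pt : ℝ,
      HasDerivAt (fun y' => coxHobson σ y' t) py y ∧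
      HasDerivAt (deriv fun y' => coxHobson σ y' t) pyy y ∧
      HasDerivAt (fun t' => coxHobson σ y t') pt t ∧
      pt = σ ^ 2 / 2 * y ^ 4 * pyy := by
  have hs : 0 < Real.sqrt t := Real.sqrt_pos.mpr ht
  refine ⟨F σ t y,
    -(2 * phi (-(1 / (σ * y * Real.sqrt t))) / (σ ^ 3 * Real.sqrt t ^ 3 * y ^ 4)),
    -(phi (-(1 / (σ * y * Real.sqrt t))) / (σ * Real.sqrt t ^ 3)),
    hasDerivAt_coxHobson_y σ t hσ ht hy, ?_, hasDerivAt_coxHobson_t σ hσ y hy ht, ?_⟩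
  · have hev : deriv (fun y' => coxHobson σ y' t) =ᶠ[nhds y] fun y' => F σ t y' := by
      filter_upwards [Ioi_mem_nhds hy] with y' hy'
      exact (hasDerivAt_coxHobson_y σ t hσ ht hy').deriv
    exact (hasDerivAt_F σ t hσ ht hy).congr_of_eventuallyEq hev
  · field_simp
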